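/- Let a > 0 and let ψ(x) = (1/(2πa))·exp(−x²/(4πa²)) be the Gaussian density with standard deviation a·√(2π). Then the function C(m) = ∫_m^∞ (x − m)·ψ(x) dx is analytic on all of ℝ, and its Taylor coefficients c_k at 0 (so C(m) = Σ_k c_k m^k) satisfy c₀ = a, c₁ = −1/2, c₂ = 1/(4πa), c₃ = 0, c₄ = −1/(96π²a³), c₅ = 0 and c₆ = 1/(1920π³a⁵). -/

import Mathlib

/-!
Write `b = 1/(4πa²)`, so that `ψ(x) = (2πa)⁻¹ e^{-bx²}`. Splitting `x - m` and using
`∫_m^∞ x e^{-bx²} dx = e^{-bm²}/(2b)` and `∫_m^∞ e^{-bx²} dx = √(π/b)/2 - ∫_0^m e^{-bx²} dx` gives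
`C(m) = (2πa)⁻¹ (e^{-bm²}/(2b) - m√(π/b)/2 + m ∫_0^m e^{-bx²} dx)`.
Expanding `e^{-bx²}` and integrating termwise (dominated convergence) turns this into a power
series converging on all of `ℝ`; by uniqueness of power series it is the Taylor series of `C`
at `0`, and the first seven coefficients are read off.
-/

open MeasureTheory

/-- Bachelier's Gaussian density in his parametrization: `ψ(x) = (1/(2πa))·exp(−x²/(4πa²))`,
the centered Gaussian density with standard deviation `a√(2π)`. -/
noncomputable def bachelierPsi (a x : ℝ) : ℝ :=
  (2 * Real.pi * a)⁻¹ * Real.exp (-x ^ 2 / (4 * Real.pi * a ^ 2))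

/-- Bachelier call price as a function of `m = K − S₀`. -/
noncomputable def bachelierCall (a m : ℝ) : ℝ :=
  ∫ x in Set.Ioi m, (x - m) * bachelierPsi a x

open Real Set Filter FormalMultilinearSeries
open scoped NNReal

section EntirePowerSeries

variable {𝕜 : Type*} [NontriviallyNormedField 𝕜] {c : ℕ → 𝕜} {f : 𝕜 → 𝕜}

theorem radius_ofScalars_eq_top_of_hasSum (hf : ∀ x, HasSum (fun n ↦ c n * x ^ n) (f x)) :
    (ofScalars 𝕜 c).radius = ⊤ := by
  refine ENNReal.eq_top_of_forall_nnreal_le fun r ↦ ?_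
  obtain ⟨x, hx⟩ := NormedField.exists_lt_norm 𝕜 r
  refine le_trans (by exact_mod_cast hx.le)
    ((ofScalars 𝕜 c).le_radius_of_tendsto (r := ‖x‖₊) (l := 0) ?_)
  simpa [ofScalars_norm, norm_mul, norm_pow] using (hf x).summable.tendsto_atTop_zero.norm

theorem hasFPowerSeriesOnBall_ofScalars_of_hasSum
    (hf : ∀ x, HasSum (fun n ↦ c n * x ^ n) (f x)) :
    HasFPowerSeriesOnBall f (ofScalars 𝕜 c) 0 ⊤ where
  r_le := (radius_ofScalars_eq_top_of_hasSum hf).ge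
  r_pos := ENNReal.zero_lt_top
  hasSum {y} _ := by simpa [ofScalars_apply_eq, mul_comm] using hf y

theorem summable_norm_mul_pow_of_hasSum (hf : ∀ x, HasSum (fun n ↦ c n * x ^ n) (f x))
    (r : ℝ≥0) : Summable fun n ↦ ‖c n‖ * r ^ n := by
  simpa [ofScalars_norm] using
    (ofScalars 𝕜 c).summable_norm_mul_pow (by simp [radius_ofScalars_eq_top_of_hasSum hf])

theorem iteratedDeriv_div_factorial_eq_of_hasSum [CompleteSpace 𝕜] [CharZero 𝕜]
    (hf : ∀ x, HasSum (fun n ↦ c n * x ^ n) (f x)) (n : ℕ) :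
    iteratedDeriv n f 0 / n.factorial = c n := by
  have hp := (hasFPowerSeriesOnBall_ofScalars_of_hasSum hf).hasFPowerSeriesAt
  have := hp.eq_formalMultilinearSeries hp.analyticAt.hasFPowerSeriesAt
  exact congr_fun (ofScalars_series_injective 𝕜 𝕜 this.symm) n

end EntirePowerSeries

theorem hasSum_intervalIntegral_of_hasSum {c : ℕ → ℝ} {f : ℝ → ℝ}
    (hf : ∀ x, HasSum (fun n ↦ c n * x ^ n) (f x)) (m : ℝ) :
    HasSum (fun n ↦ c n * m ^ (n + 1) / (n + 1)) (∫ x in (0 : ℝ)..m, f x) := by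
  have h_dom := intervalIntegral.hasSum_integral_of_dominated_convergence
    (F := fun n x ↦ c n * x ^ n) (a := 0) (b := m) (μ := volume)
    (fun n _ ↦ ‖c n‖ * ‖m‖ ^ n) (fun n ↦ by fun_prop) (fun n ↦ ae_of_all _ fun x hx ↦ ?_)
    (ae_of_all _ fun _ _ ↦ summable_norm_mul_pow_of_hasSum hf ‖m‖₊) intervalIntegrable_const
    (ae_of_all _ fun x _ ↦ hf x)
  · simpa [intervalIntegral.integral_const_mul, integral_pow, mul_div_assoc] using h_dom
  · have : ‖x‖ ≤ ‖m‖ := by simpa using abs_sub_left_of_mem_uIcc (uIoc_subset_uIcc hx)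
    rw [norm_mul, norm_pow]
    gcongr

noncomputable def expMulSqCoeff (t : ℝ) (n : ℕ) : ℝ :=
  if Even n then t ^ (n / 2) / (n / 2).factorial else 0

theorem hasSum_expMulSqCoeff (t x : ℝ) :
    HasSum (fun n ↦ expMulSqCoeff t n * x ^ n) (exp (t * x ^ 2)) := by
  have h_even : (fun n ↦ expMulSqCoeff t n * x ^ n) ∘ (2 * ·) =
      fun k ↦ (t * x ^ 2) ^ k / k.factorial := by
    funext k
    rw [Function.comp_apply, expMulSqCoeff, if_pos (even_two_mul k),
      Nat.mul_div_cancel_left k two_pos, mul_pow, pow_mul]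
    ring
  have h_odd (n : ℕ) (hn : n ∉ range (2 * ·)) : expMulSqCoeff t n * x ^ n = 0 := by
    have : ¬ Even n := fun ⟨k, hk⟩ ↦ hn ⟨k, by simp [hk, two_mul]⟩
    simp [expMulSqCoeff, this]
  rw [← (mul_right_injective₀ (two_ne_zero' ℕ)).hasSum_iff h_odd, h_even, Real.exp_eq_exp_ℝ]
  exact NormedSpace.expSeries_div_hasSum_exp _

section Gaussian

variable {b : ℝ}

theorem integral_Ioi_mul_exp_neg_mul_sq (hb : 0 < b) (m : ℝ) :
    ∫ x in Ioi m, x * exp (-b * x ^ 2) = exp (-b * m ^ 2) / (2 * b) := by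
  have hderiv (x : ℝ) :
      HasDerivAt (fun x ↦ -exp (-b * x ^ 2) / (2 * b)) (x * exp (-b * x ^ 2)) x := by
    refine (((hasDerivAt_pow 2 x).const_mul (-b)).exp.neg.div_const (2 * b)).congr_deriv ?_
    field_simp
    ring
  have hlim : Tendsto (fun x ↦ -exp (-b * x ^ 2) / (2 * b)) atTop (nhds 0) := by
    have : Tendsto (fun x : ℝ ↦ -b * x ^ 2) atTop atBot :=
      (tendsto_pow_atTop two_ne_zero).const_mul_atTop_of_neg (neg_neg_of_pos hb)
    simpa using ((tendsto_exp_atBot.comp this).neg.div_const (2 * b))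
  rw [integral_Ioi_of_hasDerivAt_of_tendsto' (fun x _ ↦ hderiv x)
    (integrable_mul_exp_neg_mul_sq hb).integrableOn hlim]
  ring

theorem integral_Ioi_exp_neg_mul_sq (hb : 0 < b) (m : ℝ) :
    ∫ x in Ioi m, exp (-b * x ^ 2) = √(π / b) / 2 - ∫ x in (0 : ℝ)..m, exp (-b * x ^ 2) := by
  rw [← integral_gaussian_Ioi, ← intervalIntegral.integral_Ioi_sub_Ioi'
    (integrable_exp_neg_mul_sq hb).integrableOn (integrable_exp_neg_mul_sq hb).integrableOn,
    sub_sub_cancel]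

theorem integral_Ioi_sub_mul_exp_neg_mul_sq (hb : 0 < b) (m : ℝ) :
    ∫ x in Ioi m, (x - m) * exp (-b * x ^ 2)
      = exp (-b * m ^ 2) / (2 * b) - m * (√(π / b) / 2)
        + m * ∫ x in (0 : ℝ)..m, exp (-b * x ^ 2) := by
  simp_rw [sub_mul]
  rw [integral_sub (integrable_mul_exp_neg_mul_sq hb).integrableOn
      ((integrable_exp_neg_mul_sq hb).const_mul m).integrableOn,
    integral_const_mul, integral_Ioi_mul_exp_neg_mul_sq hb, integral_Ioi_exp_neg_mul_sq hb]
  ring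

end Gaussian

noncomputable def gaussianCallCoeff (b : ℝ) : ℕ → ℝ
  | 0 => 1 / (2 * b)
  | 1 => -(√(π / b) / 2)
  | n + 2 => expMulSqCoeff (-b) (n + 2) / (2 * b) + expMulSqCoeff (-b) n / (n + 1)

theorem hasSum_gaussianCallCoeff {b : ℝ} (hb : 0 < b) (m : ℝ) :
    HasSum (fun n ↦ gaussianCallCoeff b n * m ^ n)
      (∫ x in Ioi m, (x - m) * exp (-b * x ^ 2)) := by
  have h_exp := (hasSum_nat_add_iff' 2).mpr (hasSum_expMulSqCoeff (-b) m)
  have h_int := hasSum_intervalIntegral_of_hasSum (hasSum_expMulSqCoeff (-b)) m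
  have h_terms : (fun n ↦ gaussianCallCoeff b (n + 2) * m ^ (n + 2)) = fun n ↦
      expMulSqCoeff (-b) (n + 2) * m ^ (n + 2) / (2 * b)
        + m * (expMulSqCoeff (-b) n * m ^ (n + 1) / (n + 1)) := by
    funext n
    simp only [gaussianCallCoeff]
    ring
  rw [integral_Ioi_sub_mul_exp_neg_mul_sq hb, ← hasSum_nat_add_iff' 2, h_terms]
  convert! (h_exp.div_const (2 * b)).add (h_int.mul_left m) using 1
  simp only [Finset.sum_range_succ, Finset.sum_range_zero, gaussianCallCoeff, expMulSqCoeff,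
    Even.zero, Nat.not_even_one, if_true, if_false, Nat.zero_div, pow_zero, Nat.factorial_zero,
    Nat.cast_one, div_one]
  ring

theorem bachelierCall_eq (a m : ℝ) :
    bachelierCall a m
      = (2 * π * a)⁻¹ * ∫ x in Ioi m, (x - m) * exp (-(4 * π * a ^ 2)⁻¹ * x ^ 2) := by
  rw [bachelierCall, ← integral_const_mul]
  congr 1 with x
  rw [bachelierPsi, neg_div, div_eq_inv_mul, neg_mul]
  ring

theorem hasSum_bachelierCall {a : ℝ} (ha : 0 < a) (m : ℝ) :
    HasSum (fun n ↦ (2 * π * a)⁻¹ * gaussianCallCoeff (4 * π * a ^ 2)⁻¹ n * m ^ n)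
      (bachelierCall a m) := by
  simpa only [bachelierCall_eq, mul_assoc]
    using (hasSum_gaussianCallCoeff (by positivity) m).mul_left (2 * π * a)⁻¹

/-- Bachelier's series: `C(m) = ∫_m^∞ (x − m)ψ(x)dx` is analytic on all of `ℝ`, equals its
Taylor series everywhere, and its Taylor coefficients `c_k = C^{(k)}(0)/k!` satisfy
`c₀ = a`, `c₁ = −1/2`, `c₂ = 1/(4πa)`, `c₃ = 0`, `c₄ = −1/(96π²a³)`, `c₅ = 0`,
`c₆ = 1/(1920π³a⁵)`. -/
theorem bachelier_series_coefficients (a : ℝ) (ha : 0 < a) :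
    AnalyticOnNhd ℝ (bachelierCall a) Set.univ
      ∧ (∀ m : ℝ, HasSum
          (fun k : ℕ => iteratedDeriv k (bachelierCall a) 0 / (Nat.factorial k : ℝ) * m ^ k)
          (bachelierCall a m))
      ∧ iteratedDeriv 0 (bachelierCall a) 0 / (Nat.factorial 0 : ℝ) = a
      ∧ iteratedDeriv 1 (bachelierCall a) 0 / (Nat.factorial 1 : ℝ) = -(1 / 2)
      ∧ iteratedDeriv 2 (bachelierCall a) 0 / (Nat.factorial 2 : ℝ) = 1 / (4 * Real.pi * a)
      ∧ iteratedDeriv 3 (bachelierCall a) 0 / (Nat.factorial 3 : ℝ) = 0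
      ∧ iteratedDeriv 4 (bachelierCall a) 0 / (Nat.factorial 4 : ℝ)
          = -(1 / (96 * Real.pi ^ 2 * a ^ 3))
      ∧ iteratedDeriv 5 (bachelierCall a) 0 / (Nat.factorial 5 : ℝ) = 0
      ∧ iteratedDeriv 6 (bachelierCall a) 0 / (Nat.factorial 6 : ℝ)
          = 1 / (1920 * Real.pi ^ 3 * a ^ 5) := by
  have h_sum := hasSum_bachelierCall ha
  have h_coeff := iteratedDeriv_div_factorial_eq_of_hasSum h_sum
  have h_sqrt : √(π / (4 * π * a ^ 2)⁻¹) = 2 * π * a := by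
    rw [div_inv_eq_mul, show π * (4 * π * a ^ 2) = (2 * π * a) ^ 2 by ring,
      sqrt_sq (by positivity)]
  refine ⟨fun x _ ↦ (hasFPowerSeriesOnBall_ofScalars_of_hasSum h_sum).analyticAt_of_mem
    (by simp), fun m ↦ by simpa only [h_coeff] using h_sum m, ?_, ?_, ?_, ?_, ?_, ?_, ?_⟩
  all_goals
    rw [h_coeff]
    simp only [gaussianCallCoeff, expMulSqCoeff, h_sqrt]
    norm_num [Nat.even_iff, Nat.factorial] <;> field_simp <;> ring
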